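/- For all integers N ≥ 1 and n ≥ 1, P( ρ_N > 2n ) ≤ N / (2n+2)^{1/2}. -/

import Mathlib

open MeasureTheory ProbabilityTheory Filter
open scoped Classical ENNReal

variable {Ω : Type*} [MeasurableSpace Ω]

/-- The walk `S n = X 1 + ⋯ + X n` built from the steps `X 1, X 2, …`. -/
def walk (X : ℕ → Ω → ℤ) (n : ℕ) (ω : Ω) : ℤ := ∑ i ∈ Finset.range n, X (i + 1) ω

/-- `X 1, X 2, …` are i.i.d. steps of a simple symmetric random walk:
independent, with `P(X i = 1) = P(X i = -1) = 1/2`. -/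
def IsSSRW (P : Measure Ω) (X : ℕ → Ω → ℤ) : Prop :=
  (∀ i, Measurable (X i)) ∧
  iIndepFun X P ∧
  (∀ i, P {ω | X i ω = 1} = 1 / 2 ∧ P {ω | X i ω = -1} = 1 / 2)

/-- Local time `ξ(k,n) = #{i : 1 ≤ i ≤ n, S i = k}` of the walk at site `k` up to time `n`. -/
noncomputable def localTime (X : ℕ → Ω → ℤ) (k : ℤ) (n : ℕ) (ω : Ω) : ℕ :=
  ((Finset.Icc 1 n).filter fun i => walk X i ω = k).card

/-- `ρ N`, the time of the `N`-th return of the walk to zero (the least time by which the walk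
has visited `0` exactly `N` times). -/
noncomputable def rho (X : ℕ → Ω → ℤ) (N : ℕ) (ω : Ω) : ℕ :=
  sInf {n | localTime X 0 n ω = N}

/-- `ξ(k,n,↑)`: the number of upward excursions away from `k` completed up to time `n`,
counted through their endpoints. -/
noncomputable def upCount (X : ℕ → Ω → ℤ) (k : ℤ) (n : ℕ) (ω : Ω) : ℕ :=
  ((Finset.Icc 1 n).filter fun b => ∃ a < b, walk X a ω = k ∧ walk X b ω = k ∧
      ∀ i, a < i → i < b → k < walk X i ω).card

/-- `ξ(k,n,↓)`: the number of downward excursions away from `k` completed up to time `n`,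
counted through their endpoints. -/
noncomputable def downCount (X : ℕ → Ω → ℤ) (k : ℤ) (n : ℕ) (ω : Ω) : ℕ :=
  ((Finset.Icc 1 n).filter fun b => ∃ a < b, walk X a ω = k ∧ walk X b ω = k ∧
      ∀ i, a < i → i < b → walk X i ω < k).card

/-- `ρ⁺ N`, the endpoint of the `N`-th upward excursion of the walk away from `0`. -/
noncomputable def rhoPlus (X : ℕ → Ω → ℤ) (N : ℕ) (ω : Ω) : ℕ :=
  sInf {n | upCount X 0 n ω = N}

/-- `τ_i^{(k)}`: `τ_0^{(k)} = 0` and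
`τ_i^{(k)} = min {j > τ_{i-1}^{(k)} : S (j-1) = k, S j = k - 1}`. -/
noncomputable def tauRW (X : ℕ → Ω → ℤ) (k : ℤ) : ℕ → Ω → ℕ
  | 0 => fun _ => 0
  | i + 1 => fun ω =>
      sInf {j | tauRW X k i ω < j ∧ walk X (j - 1) ω = k ∧ walk X j ω = k - 1}

/-- `T_i^{(k)} = ξ(k, τ_i^{(k)}) − ξ(k, τ_{i-1}^{(k)})`. -/
noncomputable def T (X : ℕ → Ω → ℤ) (k : ℤ) (i : ℕ) (ω : Ω) : ℕ :=
  localTime X k (tauRW X k i ω) ω - localTime X k (tauRW X k (i - 1) ω) ω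

/-- `U^{(k)}(j) = T_1^{(k)} + ⋯ + T_j^{(k)} − 2 j`. -/
noncomputable def U (X : ℕ → Ω → ℤ) (k : ℤ) (j : ℕ) (ω : Ω) : ℤ :=
  (∑ i ∈ Finset.Icc 1 j, (T X k i ω : ℤ)) - 2 * (j : ℤ)

/-- `κ n = max {i ≤ n : S i = 0}`, the last zero of the walk up to time `n`. -/
noncomputable def kappa (X : ℕ → Ω → ℤ) (n : ℕ) (ω : Ω) : ℕ :=
  sSup {i | i ≤ n ∧ walk X i ω = 0}

/-!
Only the first `2n` steps matter, and on them the walk is uniform over the `4ⁿ` sign sequences,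
so it suffices to count the paths of length `2n` with fewer than `N` returns to `0`. Cutting a
path at its first return shows that the paths with `j + 1` returns satisfy the same convolution
recursion over first-return paths as the paths ending at `0`. By the reflection principle the
paths with no return are as many as those ending at `0`, namely `C(2n, n)`, so by induction on
`j` at most `C(2n, n)` paths have exactly `j` returns. Finally `C(2n, n) √(2n + 2) ≤ 4ⁿ`.
-/

lemma Nat.centralBinom_sq_mul_le_sixteen_pow {n : ℕ} (hn : n ≠ 0) :
    n.centralBinom ^ 2 * (2 * n + 2) ≤ 16 ^ n := by
  induction n, Nat.one_le_iff_ne_zero.2 hn using Nat.le_induction with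
  | base => simp [Nat.centralBinom, Nat.choose]
  | succ n hn ih =>
    have hrec := Nat.succ_mul_centralBinom_succ n
    refine le_of_mul_le_mul_left ?_ (by positivity : 0 < (n + 1) ^ 2)
    calc (n + 1) ^ 2 * ((n + 1).centralBinom ^ 2 * (2 * (n + 1) + 2))
        = (2 * (2 * n + 1) * n.centralBinom) ^ 2 * (2 * n + 4) := by rw [← hrec]; ring
      _ = 4 * n.centralBinom ^ 2 * ((2 * n + 1) ^ 2 * (2 * n + 4)) := by ring
      _ ≤ 4 * n.centralBinom ^ 2 * (2 * n + 2) ^ 3 := by gcongr; nlinarith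
      _ = (n + 1) ^ 2 * 16 * (n.centralBinom ^ 2 * (2 * n + 2)) := by ring
      _ ≤ (n + 1) ^ 2 * 16 * 16 ^ n := by gcongr; exact ih (by omega)
      _ = (n + 1) ^ 2 * 16 ^ (n + 1) := by ring

lemma Nat.centralBinom_mul_sqrt_le_four_pow {n : ℕ} (hn : n ≠ 0) :
    (n.centralBinom : ℝ) * √(2 * n + 2) ≤ 4 ^ n := by
  refine le_of_pow_le_pow_left₀ two_ne_zero (by positivity) ?_
  rw [mul_pow, Real.sq_sqrt (by positivity), ← pow_mul, mul_comm n 2, pow_mul]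
  exact_mod_cast Nat.centralBinom_sq_mul_le_sixteen_pow hn

namespace BoolPath

def paths : ℕ → Finset (List Bool)
  | 0 => {[]}
  | L + 1 => (paths L).image (List.cons true) ∪ (paths L).image (List.cons false)

@[simp] lemma mem_paths {L : ℕ} {l : List Bool} : l ∈ paths L ↔ l.length = L := by
  induction L generalizing l with
  | zero => simp [paths]
  | succ L ih =>
    rcases l with _ | ⟨b, l⟩
    · simp [paths]
    · cases b <;> simp [paths, ih]

lemma card_filter_paths_succ (L : ℕ) (Q : List Bool → Prop) [DecidablePred Q] :
    ((paths (L + 1)).filter Q).card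
      = ((paths L).filter fun l => Q (true :: l)).card
        + ((paths L).filter fun l => Q (false :: l)).card := by
  rw [paths, Finset.filter_union, Finset.filter_image, Finset.filter_image,
    Finset.card_union_of_disjoint (by grind [Finset.disjoint_left]),
    Finset.card_image_of_injective _ List.cons_injective,
    Finset.card_image_of_injective _ List.cons_injective]

lemma card_filter_paths_take_drop (L t : ℕ) (ht : t ≤ L) (Q R : List Bool → Prop)
    [DecidablePred Q] [DecidablePred R] :
    ((paths L).filter fun l => Q (l.take t) ∧ R (l.drop t)).card
      = ((paths t).filter Q).card * ((paths (L - t)).filter R).card := by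
  rw [← Finset.card_product]
  refine Finset.card_nbij' (fun l => (l.take t, l.drop t)) (fun p => p.1 ++ p.2) ?_ ?_ ?_ ?_ <;>
    intro _ _ <;> simp_all

lemma card_filter_paths_map_not (L : ℕ) (Q : List Bool → Prop) [DecidablePred Q] :
    ((paths L).filter fun l => Q (l.map not)).card = ((paths L).filter Q).card := by
  refine Finset.card_nbij' (List.map not) (List.map not) ?_ ?_ ?_ ?_ <;> intro l hl <;>
    simp_all [Function.comp_def]

lemma card_paths_count_true (L k : ℕ) :
    ((paths L).filter fun l => l.count true = k).card = L.choose k := by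
  induction L generalizing k with
  | zero => cases k <;> simp [paths, Finset.filter_singleton]
  | succ L ih =>
    rw [card_filter_paths_succ]
    cases k with
    | zero => simp [ih]
    | succ k => simp [ih, Nat.choose_succ_succ]

def step (b : Bool) : ℤ := if b then 1 else -1

lemma step_decide_eq_one {z : ℤ} (hz : z = 1 ∨ z = -1) : step (decide (z = 1)) = z := by
  rcases hz with rfl | rfl <;> simp [step]

def endpoint (l : List Bool) : ℤ := (l.map step).sum

/-- Heights are defined at all times: past the end of the path they stay at `endpoint l`. -/
def height (l : List Bool) (k : ℕ) : ℤ := endpoint (l.take k)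

@[simp] lemma endpoint_nil : endpoint [] = 0 := rfl

@[simp] lemma endpoint_cons (b : Bool) (l : List Bool) :
    endpoint (b :: l) = step b + endpoint l := by
  simp [endpoint]

@[simp] lemma endpoint_append (a b : List Bool) : endpoint (a ++ b) = endpoint a + endpoint b := by
  simp [endpoint]

lemma endpoint_eq_two_mul_count_sub_length (l : List Bool) :
    endpoint l = 2 * l.count true - l.length := by
  induction l with
  | nil => simp
  | cons b l ih => cases b <;> simp [ih, step] <;> ring

@[simp] lemma endpoint_map_not (l : List Bool) : endpoint (l.map not) = -endpoint l := by
  induction l with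
  | nil => simp
  | cons b l ih => cases b <;> simp [ih, step] <;> ring

@[simp] lemma height_zero (l : List Bool) : height l 0 = 0 := rfl

lemma height_of_length_le {l : List Bool} {k : ℕ} (h : l.length ≤ k) : height l k = endpoint l := by
  rw [height, List.take_of_length_le h]

lemma height_length (l : List Bool) : height l l.length = endpoint l :=
  height_of_length_le le_rfl

lemma height_add (l : List Bool) (t k : ℕ) :
    height l (t + k) = height l t + height (l.drop t) k := by
  simp [height, List.take_add]

@[simp] lemma height_cons_succ (b : Bool) (l : List Bool) (k : ℕ) :
    height (b :: l) (k + 1) = step b + height l k := by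
  simp [height]

@[simp] lemma height_map_not (l : List Bool) (k : ℕ) : height (l.map not) k = -height l k := by
  simp [height, ← List.map_take]

lemma height_take_of_le {l : List Bool} {t k : ℕ} (h : k ≤ t) : height (l.take t) k = height l k := by
  simp [height, List.take_take, min_eq_left h]

lemma height_sub_one_le_succ (l : List Bool) (k : ℕ) : height l k - 1 ≤ height l (k + 1) := by
  have : -1 ≤ height (l.drop k) 1 := by
    rcases l.drop k with _ | ⟨_ | _, _⟩ <;> simp [height, step]
  rw [height_add]
  omega

lemma exists_height_eq {l : List Bool} {a b : ℕ} {v : ℤ} (hab : a ≤ b) (ha : v ≤ height l a)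
    (hb : height l b ≤ v) : ∃ k, a ≤ k ∧ k ≤ b ∧ height l k = v := by
  induction b, hab using Nat.le_induction with
  | base => exact ⟨a, le_rfl, le_rfl, le_antisymm hb ha⟩
  | succ b hab ih =>
    by_cases hbv : height l b ≤ v
    · obtain ⟨k, hak, hkb, hk⟩ := ih hbv
      exact ⟨k, hak, hkb.trans b.le_succ, hk⟩
    · have := height_sub_one_le_succ l b
      exact ⟨b + 1, hab.trans b.le_succ, le_rfl, by omega⟩

def HitsNegOne (l : List Bool) : Prop := ∃ k, height l k = -1

noncomputable def firstHit (l : List Bool) : ℕ := sInf {k | height l k = -1}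

noncomputable def reflect (l : List Bool) : List Bool :=
  l.take (firstHit l) ++ (l.drop (firstHit l)).map not

@[simp] lemma length_reflect (l : List Bool) : (reflect l).length = l.length := by
  simp only [reflect, List.length_append, List.length_take, List.length_map, List.length_drop]
  omega

section Reflection

variable {l : List Bool}

lemma height_firstHit (h : HitsNegOne l) : height l (firstHit l) = -1 := Nat.sInf_mem h

lemma firstHit_le {k : ℕ} (h : height l k = -1) : firstHit l ≤ k := Nat.sInf_le h

lemma firstHit_le_length (h : HitsNegOne l) : firstHit l ≤ l.length := by
  by_contra! hlt
  have := firstHit_le (l := l) (k := l.length)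
  rw [height_length, ← height_of_length_le hlt.le, height_firstHit h] at this
  omega

lemma height_reflect_of_le (h : HitsNegOne l) {k : ℕ} (hk : k ≤ firstHit l) :
    height (reflect l) k = height l k := by
  have hlen : (l.take (firstHit l)).length = firstHit l := by simp [firstHit_le_length h]
  rw [height, reflect, List.take_append_of_le_length (by omega), ← height, height_take_of_le hk]

lemma hitsNegOne_reflect (h : HitsNegOne l) : HitsNegOne (reflect l) :=
  ⟨firstHit l, by rw [height_reflect_of_le h le_rfl, height_firstHit h]⟩

lemma endpoint_reflect (h : HitsNegOne l) : endpoint (reflect l) = -2 - endpoint l := by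
  have hsplit := height_add l (firstHit l) l.length
  rw [height_firstHit h, height_of_length_le (by omega), height_of_length_le (by simp)] at hsplit
  have htake : endpoint (l.take (firstHit l)) = -1 := height_firstHit h
  simp only [reflect, endpoint_append, endpoint_map_not, htake]
  omega

lemma firstHit_reflect (h : HitsNegOne l) : firstHit (reflect l) = firstHit l := by
  have hle : firstHit (reflect l) ≤ firstHit l :=
    firstHit_le (by rw [height_reflect_of_le h le_rfl, height_firstHit h])
  refine le_antisymm hle (firstHit_le ?_)
  rw [← height_reflect_of_le h hle, height_firstHit (hitsNegOne_reflect h)]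

lemma reflect_reflect (h : HitsNegOne l) : reflect (reflect l) = l := by
  have hlen : (l.take (firstHit l)).length = firstHit l := by simp [firstHit_le_length h]
  rw [reflect, firstHit_reflect h, reflect, List.take_append_of_le_length hlen.ge,
    List.drop_append_of_le_length hlen.ge, List.take_take, min_self]
  simp [Function.comp_def]

end Reflection

lemma hitsNegOne_of_endpoint_le {l : List Bool} (h : endpoint l ≤ -1) : HitsNegOne l := by
  obtain ⟨k, -, -, hk⟩ := exists_height_eq (l := l) (v := -1) (Nat.zero_le l.length) (by simp)
    (by rwa [height_length])
  exact ⟨k, hk⟩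

lemma card_reflect (L : ℕ) :
    ((paths L).filter fun l => 0 ≤ endpoint l ∧ HitsNegOne l).card
      = ((paths L).filter fun l => endpoint l ≤ -2).card := by
  refine Finset.card_nbij' reflect reflect ?_ ?_ ?_ ?_ <;> intro l hl <;>
    simp only [Finset.coe_filter, Set.mem_ofPred_eq, mem_paths, length_reflect] at hl ⊢
  · obtain ⟨hL, h0, hhit⟩ := hl
    exact ⟨hL, by rw [endpoint_reflect hhit]; omega⟩
  · have hhit := hitsNegOne_of_endpoint_le (l := l) (by omega)
    exact ⟨hl.1, by rw [endpoint_reflect hhit]; omega, hitsNegOne_reflect hhit⟩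
  · exact reflect_reflect hl.2.2
  · exact reflect_reflect (hitsNegOne_of_endpoint_le (by omega))

def IsNonneg (l : List Bool) : Prop := ∀ k, 0 ≤ height l k

lemma not_isNonneg_iff {l : List Bool} : ¬IsNonneg l ↔ HitsNegOne l := by
  refine ⟨fun h => ?_, fun ⟨k, hk⟩ hl => by linarith [hl k]⟩
  obtain ⟨k, hk⟩ : ∃ k, height l k < 0 := by simpa [IsNonneg] using h
  obtain ⟨j, -, -, hj⟩ :=
    exists_height_eq (l := l) (v := -1) (Nat.zero_le k) (by simp) (by omega)
  exact ⟨j, hj⟩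

lemma card_isNonneg (L : ℕ) :
    ((paths L).filter IsNonneg).card
      = ((paths L).filter fun l => endpoint l = 0 ∨ endpoint l = 1).card := by
  have hsplit := Finset.card_filter_add_card_filter_not
    (s := (paths L).filter fun l => 0 ≤ endpoint l) IsNonneg
  have hsplit' := Finset.card_filter_add_card_filter_not
    (s := (paths L).filter fun l => 0 ≤ endpoint l) fun l => endpoint l = 0 ∨ endpoint l = 1
  have hsymm := card_filter_paths_map_not L fun l => endpoint l ≤ -2
  simp only [Finset.filter_filter, not_isNonneg_iff, endpoint_map_not] at hsplit hsplit' hsymm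
  rw [card_reflect] at hsplit
  have hnonneg : ((paths L).filter fun l => 0 ≤ endpoint l ∧ IsNonneg l)
      = (paths L).filter IsNonneg :=
    Finset.filter_congr fun l _ => and_iff_right_of_imp fun h => height_length l ▸ h l.length
  have hsmall : ((paths L).filter fun l => 0 ≤ endpoint l ∧ (endpoint l = 0 ∨ endpoint l = 1))
      = (paths L).filter fun l => endpoint l = 0 ∨ endpoint l = 1 :=
    Finset.filter_congr fun l _ => by omega
  have hlarge : ((paths L).filter fun l => 0 ≤ endpoint l ∧ ¬(endpoint l = 0 ∨ endpoint l = 1))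
      = (paths L).filter fun l => -endpoint l ≤ -2 :=
    Finset.filter_congr fun l _ => by omega
  rw [hnonneg] at hsplit
  rw [hsmall, hlarge] at hsplit'
  omega

lemma card_isNonneg_two_mul_add_one (n : ℕ) :
    ((paths (2 * n + 1)).filter IsNonneg).card = (2 * n + 1).choose (n + 1) := by
  rw [card_isNonneg, ← card_paths_count_true]
  refine congrArg Finset.card (Finset.filter_congr fun l hl => ?_)
  rw [endpoint_eq_two_mul_count_sub_length, mem_paths.1 hl]
  push_cast
  omega

noncomputable def zeroCount (l : List Bool) : ℕ :=
  ((Finset.Icc 1 l.length).filter fun k => height l k = 0).card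

@[simp] lemma zeroCount_map_not (l : List Bool) : zeroCount (l.map not) = zeroCount l := by
  simp [zeroCount]

lemma zeroCount_cons_true_eq_zero_iff {l : List Bool} :
    zeroCount (true :: l) = 0 ↔ IsNonneg l := by
  rw [← not_iff_not, not_isNonneg_iff, zeroCount, Finset.card_eq_zero, Finset.filter_eq_empty_iff]
  push Not
  constructor
  · rintro ⟨_ | j, hj, hj0⟩
    · simp at hj
    · exact ⟨j, by simp [step] at hj0; omega⟩
  · rintro ⟨k, hk⟩
    have hmin : height l (min k l.length) = -1 := by
      rcases le_total k l.length with h | h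
      · rwa [min_eq_left h]
      · rwa [min_eq_right h, height_length, ← height_of_length_le h]
    exact ⟨min k l.length + 1, by simp, by simp [step, hmin]⟩

lemma card_zeroCount_eq_zero (n : ℕ) :
    ((paths (2 * n)).filter fun l => zeroCount l = 0).card = n.centralBinom := by
  cases n with
  | zero => simp +contextual [paths, zeroCount, Finset.filter_singleton, Nat.one_le_iff_ne_zero]
  | succ n =>
    have hfalse : ∀ l, zeroCount (false :: l) = zeroCount (true :: l.map not) := fun l => by
      rw [← zeroCount_map_not]
      simp
    rw [show 2 * (n + 1) = 2 * n + 1 + 1 by ring, card_filter_paths_succ]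
    simp only [hfalse, zeroCount_cons_true_eq_zero_iff]
    rw [card_filter_paths_map_not _ IsNonneg, card_isNonneg_two_mul_add_one,
      Nat.centralBinom_eq_two_mul_choose, show 2 * (n + 1) = 2 * n + 1 + 1 by ring,
      Nat.choose_succ_succ (2 * n + 1) n, Nat.choose_symm_half]

def IsFirstZero (l : List Bool) (t : ℕ) : Prop :=
  1 ≤ t ∧ height l t = 0 ∧ ∀ k, 1 ≤ k → k < t → height l k ≠ 0

def IsFirstReturn (l : List Bool) : Prop := IsFirstZero l l.length

section FirstZero

variable {l : List Bool} {t : ℕ}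

lemma IsFirstZero.unique {t' : ℕ} (h : IsFirstZero l t) (h' : IsFirstZero l t') : t = t' := by
  by_contra hne
  rcases Nat.lt_or_gt_of_ne hne with hlt | hlt
  · exact h'.2.2 t h.1 hlt h.2.1
  · exact h.2.2 t' h'.1 hlt h'.2.1

lemma exists_isFirstZero {k : ℕ} (hk : 1 ≤ k) (h0 : height l k = 0) :
    ∃ t ≤ k, IsFirstZero l t := by
  have hex : ∃ t, 1 ≤ t ∧ height l t = 0 := ⟨k, hk, h0⟩
  exact ⟨Nat.find hex, Nat.find_min' hex ⟨hk, h0⟩, (Nat.find_spec hex).1, (Nat.find_spec hex).2,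
    fun j hj hjt hj0 => Nat.find_min hex hjt ⟨hj, hj0⟩⟩

lemma isFirstReturn_take_iff (ht : t ≤ l.length) : IsFirstReturn (l.take t) ↔ IsFirstZero l t := by
  rw [IsFirstReturn, List.length_take, min_eq_left ht]
  simp +contextual [IsFirstZero, height_take_of_le, le_of_lt]

lemma zeroCount_eq_one_add_zeroCount_drop (h : IsFirstZero l t) (ht : t ≤ l.length) :
    zeroCount l = 1 + zeroCount (l.drop t) := by
  have hIcc : Finset.Icc 1 l.length
      = Finset.Icc 1 t ∪ (Finset.Icc 1 (l.length - t)).map (addLeftEmbedding t) := by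
    rw [Finset.map_add_left_Icc]
    ext
    simp only [Finset.mem_union, Finset.mem_Icc]
    omega
  have hfirst : (Finset.Icc 1 t).filter (fun k => height l k = 0) = {t} := by
    ext k
    simp only [Finset.mem_filter, Finset.mem_Icc, Finset.mem_singleton]
    refine ⟨fun ⟨⟨hk1, hkt⟩, hk0⟩ => ?_, fun hk => by subst hk; exact ⟨⟨h.1, le_rfl⟩, h.2.1⟩⟩
    by_contra hne
    exact h.2.2 k hk1 (by omega) hk0
  rw [zeroCount, zeroCount, hIcc, Finset.filter_union, Finset.card_union_of_disjoint, hfirst,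
    Finset.filter_map, Finset.card_map, Finset.card_singleton, List.length_drop]
  · simp [height_add, h.2.1]
  · refine Finset.disjoint_filter_filter ?_
    rw [Finset.map_add_left_Icc, Finset.disjoint_left]
    simp only [Finset.mem_Icc]
    omega

lemma endpoint_drop_of_height_eq_zero (h : height l t = 0) : endpoint (l.drop t) = endpoint l := by
  have := height_add l t l.length
  rw [h, zero_add, height_of_length_le (by omega), height_of_length_le (by simp)] at this
  exact this.symm

end FirstZero

noncomputable def numFirstReturns (t : ℕ) : ℕ := ((paths t).filter IsFirstReturn).card

lemma card_filter_exists_isFirstZero (L : ℕ) (R : List Bool → Prop) [DecidablePred R] :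
    ((paths L).filter fun l => ∃ t ≤ L, IsFirstZero l t ∧ R (l.drop t)).card
      = ∑ t ∈ Finset.Icc 1 L,
          numFirstReturns t * ((paths (L - t)).filter R).card := by
  have hunion : ((paths L).filter fun l => ∃ t ≤ L, IsFirstZero l t ∧ R (l.drop t))
      = (Finset.Icc 1 L).biUnion fun t =>
          (paths L).filter fun l => IsFirstReturn (l.take t) ∧ R (l.drop t) := by
    ext l
    simp only [Finset.mem_filter, Finset.mem_biUnion, Finset.mem_Icc, mem_paths]
    constructor
    · rintro ⟨rfl, t, ht, h, hR⟩
      exact ⟨t, ⟨h.1, ht⟩, rfl, (isFirstReturn_take_iff ht).2 h, hR⟩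
    · rintro ⟨t, ⟨-, ht⟩, rfl, h, hR⟩
      exact ⟨rfl, t, ht, (isFirstReturn_take_iff ht).1 h, hR⟩
  rw [hunion, Finset.card_biUnion]
  · refine Finset.sum_congr rfl fun t ht => ?_
    exact card_filter_paths_take_drop L t (Finset.mem_Icc.1 ht).2 _ _
  · intro t ht t' ht' hne
    rw [Finset.mem_coe, Finset.mem_Icc] at ht ht'
    refine Finset.disjoint_left.2 fun l hl hl' => hne ?_
    simp only [Finset.mem_filter, mem_paths] at hl hl'
    rw [isFirstReturn_take_iff (by omega)] at hl hl'
    exact hl.2.1.unique hl'.2.1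

noncomputable def numWithZeroCount (L j : ℕ) : ℕ := ((paths L).filter fun l => zeroCount l = j).card

noncomputable def numBridges (L : ℕ) : ℕ := ((paths L).filter fun l => endpoint l = 0).card

lemma numBridges_two_mul (n : ℕ) : numBridges (2 * n) = n.centralBinom := by
  rw [numBridges, Nat.centralBinom_eq_two_mul_choose, ← card_paths_count_true]
  refine congrArg Finset.card (Finset.filter_congr fun l hl => ?_)
  rw [endpoint_eq_two_mul_count_sub_length, mem_paths.1 hl]
  push_cast
  omega

lemma numFirstReturns_eq_zero_of_odd {t : ℕ} (ht : Odd t) : numFirstReturns t = 0 := by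
  rw [numFirstReturns, Finset.card_eq_zero, Finset.filter_eq_empty_iff]
  intro l hl hret
  have h0 := hret.2.1
  rw [height_length, endpoint_eq_two_mul_count_sub_length, mem_paths.1 hl] at h0
  obtain ⟨m, rfl⟩ := ht
  omega

lemma exists_isFirstZero_of_zeroCount_pos {l : List Bool} (h : 0 < zeroCount l) :
    ∃ t ≤ l.length, IsFirstZero l t := by
  obtain ⟨k, hk⟩ := Finset.card_pos.1 h
  rw [Finset.mem_filter, Finset.mem_Icc] at hk
  obtain ⟨t, htk, ht⟩ := exists_isFirstZero hk.1.1 hk.2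
  exact ⟨t, htk.trans hk.1.2, ht⟩

lemma numWithZeroCount_succ (L j : ℕ) :
    numWithZeroCount L (j + 1)
      = ∑ t ∈ Finset.Icc 1 L, numFirstReturns t * numWithZeroCount (L - t) j := by
  unfold numWithZeroCount
  rw [← card_filter_exists_isFirstZero]
  refine congrArg Finset.card (Finset.filter_congr fun l hl => ?_)
  rw [mem_paths] at hl
  subst hl
  constructor
  · intro hj
    obtain ⟨t, ht, hfirst⟩ := exists_isFirstZero_of_zeroCount_pos (l := l) (by omega)
    have := zeroCount_eq_one_add_zeroCount_drop hfirst ht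
    exact ⟨t, ht, hfirst, by omega⟩
  · rintro ⟨t, ht, hfirst, hj⟩
    rw [zeroCount_eq_one_add_zeroCount_drop hfirst ht, hj, add_comm]

lemma numBridges_eq_sum {L : ℕ} (hL : 1 ≤ L) :
    numBridges L = ∑ t ∈ Finset.Icc 1 L, numFirstReturns t * numBridges (L - t) := by
  unfold numBridges
  rw [← card_filter_exists_isFirstZero]
  refine congrArg Finset.card (Finset.filter_congr fun l hl => ?_)
  rw [mem_paths] at hl
  subst hl
  constructor
  · intro h0
    obtain ⟨t, ht, hfirst⟩ := exists_isFirstZero hL (by rwa [height_length])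
    exact ⟨t, ht, hfirst, by rw [endpoint_drop_of_height_eq_zero hfirst.2.1, h0]⟩
  · rintro ⟨t, -, hfirst, h0⟩
    rwa [← endpoint_drop_of_height_eq_zero hfirst.2.1]

lemma numWithZeroCount_le_centralBinom (j n : ℕ) : numWithZeroCount (2 * n) j ≤ n.centralBinom := by
  induction j generalizing n with
  | zero => exact (card_zeroCount_eq_zero n).le
  | succ j ih =>
    rcases Nat.eq_zero_or_pos n with rfl | hn
    · simp [numWithZeroCount_succ]
    rw [numWithZeroCount_succ, ← numBridges_two_mul, numBridges_eq_sum (by omega)]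
    refine Finset.sum_le_sum fun t ht => ?_
    rcases Nat.even_or_odd t with ⟨m, rfl⟩ | hodd
    · rw [show 2 * n - (m + m) = 2 * (n - m) by omega, numBridges_two_mul]
      exact Nat.mul_le_mul_left _ (ih (n - m))
    · simp [numFirstReturns_eq_zero_of_odd hodd]

lemma card_zeroCount_lt_le (n N : ℕ) :
    ((paths (2 * n)).filter fun l => zeroCount l < N).card ≤ N * n.centralBinom := by
  rw [Finset.card_eq_sum_card_fiberwise (f := zeroCount) (t := Finset.range N)
    fun l hl => Finset.mem_range.2 (Finset.mem_filter.1 hl).2]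
  calc _ ≤ ∑ j ∈ Finset.range N, numWithZeroCount (2 * n) j := by
        refine Finset.sum_le_sum fun j _ => Finset.card_le_card fun l hl => ?_
        simp only [Finset.mem_filter] at hl ⊢
        exact ⟨hl.1.1, hl.2⟩
    _ ≤ ∑ j ∈ Finset.range N, n.centralBinom :=
        Finset.sum_le_sum fun j _ => numWithZeroCount_le_centralBinom j n
    _ = N * n.centralBinom := by simp

lemma card_zeroCount_lt_div_le {n : ℕ} (hn : n ≠ 0) (N : ℕ) :
    (((paths (2 * n)).filter fun l => zeroCount l < N).card : ℝ) / 2 ^ (2 * n)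
      ≤ N / √(2 * n + 2) := by
  rw [pow_mul, show (2 : ℝ) ^ 2 = 4 by norm_num]
  calc _ ≤ (N * n.centralBinom : ℝ) / 4 ^ n := by
        gcongr
        exact_mod_cast card_zeroCount_lt_le n N
    _ ≤ N / √(2 * n + 2) := by
        rw [div_le_div_iff₀ (by positivity) (by positivity), mul_assoc]
        gcongr
        exact Nat.centralBinom_mul_sqrt_le_four_pow hn

end BoolPath

open BoolPath

section Walk

variable {Ω : Type*} {X : ℕ → Ω → ℤ}

def stepList (X : ℕ → Ω → ℤ) (m : ℕ) (ω : Ω) : List Bool :=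
  (List.range m).map fun i => decide (X (i + 1) ω = 1)

@[simp] lemma length_stepList (m : ℕ) (ω : Ω) : (stepList X m ω).length = m := by
  simp [stepList]

lemma height_stepList {ω : Ω} (hω : ∀ i, X i ω = 1 ∨ X i ω = -1) {m k : ℕ} (hk : k ≤ m) :
    height (stepList X m ω) k = walk X k ω := by
  rw [height, stepList, ← List.map_take, List.take_range, min_eq_left hk]
  induction k with
  | zero => simp [walk]
  | succ k ih =>
    rw [walk, Finset.sum_range_succ, ← walk, ← ih (by omega), endpoint, List.map_map,
      List.sum_range_succ, endpoint, List.map_map, Function.comp_apply,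
      step_decide_eq_one (hω (k + 1))]

lemma localTime_zero_eq_zeroCount {ω : Ω} (hω : ∀ i, X i ω = 1 ∨ X i ω = -1) (m : ℕ) :
    localTime X 0 m ω = zeroCount (stepList X m ω) := by
  rw [localTime, zeroCount, length_stepList]
  exact congrArg Finset.card (Finset.filter_congr fun k hk => by
    rw [height_stepList hω (Finset.mem_Icc.1 hk).2])

lemma localTime_succ_le (c : ℤ) (k : ℕ) (ω : Ω) :
    localTime X c (k + 1) ω ≤ localTime X c k ω + 1 := by
  rw [localTime, localTime, Finset.card_filter, Finset.card_filter,
    Finset.sum_Icc_succ_top (by omega)]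
  split_ifs <;> omega

lemma localTime_lt_of_lt_rho {N m : ℕ} {ω : Ω} (h : m < rho X N ω) : localTime X 0 m ω < N := by
  have hne : ∀ k ≤ m, localTime X 0 k ω ≠ N := fun k hk hkN => by
    have : rho X N ω ≤ k := Nat.sInf_le hkN
    omega
  suffices ∀ k ≤ m, localTime X 0 k ω < N from this m le_rfl
  intro k hk
  induction k with
  | zero => simpa [localTime, eq_comm, Nat.pos_iff_ne_zero] using hne 0 (Nat.zero_le m)
  | succ k ih =>
    have := localTime_succ_le (X := X) 0 k ω
    have := ih (by omega)
    have := hne (k + 1) hk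
    omega

end Walk

namespace IsSSRW

variable {P : Measure Ω} {X : ℕ → Ω → ℤ}

lemma measurableSet_eq (hX : IsSSRW P X) (i : ℕ) (z : ℤ) : MeasurableSet {ω | X i ω = z} :=
  hX.1 i (measurableSet_singleton z)

lemma ae_eq_one_or_eq_neg_one [IsProbabilityMeasure P] (hX : IsSSRW P X) :
    ∀ᵐ ω ∂P, ∀ i, X i ω = 1 ∨ X i ω = -1 := by
  refine ae_all_iff.2 fun i => (mem_ae_iff_prob_eq_one
    ((hX.measurableSet_eq i 1).union (hX.measurableSet_eq i (-1)))).2 ?_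
  rw [measure_union _ (hX.measurableSet_eq i (-1)), (hX.2.2 i).1, (hX.2.2 i).2, ENNReal.add_halves]
  exact Set.disjoint_left.2 fun ω h1 h2 => by simp_all

lemma measure_stepList_eq [IsProbabilityMeasure P] (hX : IsSSRW P X) {m : ℕ} {l : List Bool}
    (hl : l.length = m) : P {ω | stepList X m ω = l} = 2⁻¹ ^ m := by
  set B : ℕ → Ω → Bool := fun i ω => decide (X (i + 1) ω = 1)
  have hB : iIndepFun B P :=
    (hX.2.1.precomp Nat.succ_injective).comp (fun _ z => decide (z = 1))
      fun _ => measurable_of_countable _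
  have hBi : ∀ i b, P (B i ⁻¹' {b}) = 2⁻¹ := by
    intro i b
    cases b
    · have hc : B i ⁻¹' {false} = {ω | X (i + 1) ω = 1}ᶜ := by ext; simp [B]
      rw [hc, prob_compl_eq_one_sub (hX.measurableSet_eq _ 1), (hX.2.2 _).1, one_div,
        ENNReal.one_sub_inv_two]
    · have hc : B i ⁻¹' {true} = {ω | X (i + 1) ω = 1} := by ext; simp [B]
      rw [hc, (hX.2.2 _).1, one_div]
  have hl' : (List.range m).map (fun i => l.getD i false) = l := by
    refine List.ext_getElem (by simp [hl]) fun i _ hi => ?_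
    simp [List.getElem?_eq_getElem hi]
  have hset : {ω | stepList X m ω = l} = ⋂ i ∈ Finset.range m, B i ⁻¹' {l.getD i false} := by
    ext ω
    conv_lhs => rw [← hl']
    simp [stepList, List.map_inj_left, B]
  rw [hset, hB.measure_inter_preimage_eq_mul _ fun _ _ => measurableSet_singleton _,
    Finset.prod_congr rfl fun i _ => hBi i _, Finset.prod_const, Finset.card_range]

lemma measure_stepList_mem_le [IsProbabilityMeasure P] (hX : IsSSRW P X) {m : ℕ}
    (S : Finset (List Bool)) (hS : ∀ l ∈ S, l.length = m) :
    P {ω | stepList X m ω ∈ S} ≤ ENNReal.ofReal (S.card / 2 ^ m) := by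
  have hset : {ω | stepList X m ω ∈ S} = ⋃ l ∈ S, {ω | stepList X m ω = l} := by
    ext ω
    simp
  calc P {ω | stepList X m ω ∈ S} ≤ ∑ l ∈ S, P {ω | stepList X m ω = l} :=
        hset ▸ measure_biUnion_finset_le _ _
    _ = ENNReal.ofReal (S.card / 2 ^ m) := by
        rw [Finset.sum_congr rfl fun l hl => hX.measure_stepList_eq (hS l hl), Finset.sum_const,
          nsmul_eq_mul, ENNReal.ofReal_div_of_pos (by positivity), ENNReal.ofReal_natCast,
          ENNReal.ofReal_pow zero_le_two, ENNReal.ofReal_ofNat, div_eq_mul_inv, ENNReal.inv_pow]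

end IsSSRW

theorem statement10_general (P : Measure Ω) [IsProbabilityMeasure P] (X : ℕ → Ω → ℤ)
    (hX : IsSSRW P X) (N : ℕ) (n : ℕ) (hn : 1 ≤ n) :
    P {ω | 2 * n < rho X N ω}
      ≤ ENNReal.ofReal ((N : ℝ) / Real.sqrt (2 * (n : ℝ) + 2)) := by
  set S := (paths (2 * n)).filter fun l => zeroCount l < N
  have hsub : {ω | 2 * n < rho X N ω} ≤ᵐ[P] {ω | stepList X (2 * n) ω ∈ S} := by
    filter_upwards [hX.ae_eq_one_or_eq_neg_one] with ω hω hρ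
    change 2 * n < rho X N ω at hρ
    change stepList X (2 * n) ω ∈ S
    simpa [S, ← localTime_zero_eq_zeroCount hω] using localTime_lt_of_lt_rho hρ
  calc P {ω | 2 * n < rho X N ω} ≤ P {ω | stepList X (2 * n) ω ∈ S} := measure_mono_ae hsub
    _ ≤ ENNReal.ofReal (S.card / 2 ^ (2 * n)) :=
      hX.measure_stepList_mem_le S fun l hl => mem_paths.1 (Finset.mem_filter.1 hl).1
    _ ≤ ENNReal.ofReal (N / √(2 * n + 2)) :=
      ENNReal.ofReal_le_ofReal (card_zeroCount_lt_div_le (by omega) N)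

/-- For all integers `N ≥ 1` and `n ≥ 1`, `P(ρ_N > 2n) ≤ N/(2n+2)^{1/2}`. -/
theorem statement10 (P : Measure Ω) [IsProbabilityMeasure P] (X : ℕ → Ω → ℤ)
    (hX : IsSSRW P X) (N : ℕ) (hN : 1 ≤ N) (n : ℕ) (hn : 1 ≤ n) :
    P {ω | 2 * n < rho X N ω}
      ≤ ENNReal.ofReal ((N : ℝ) / Real.sqrt (2 * (n : ℝ) + 2)) :=
  statement10_general P X hX N n hn
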